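/- arXiv:2505.01084 — 6 statements merged into one kernel-verified Lean document; each statement's English description precedes it below -/
import Mathlib

section
/- Let p be a prime and f : A → B a homomorphism of commutative rings, where A is p-adically complete and p-torsion free and B is p-adically complete. Let M be a finitely generated A-module such that M[1/p] is a finite projective A[1/p]-module. Then the canonical map (M ⊗_A B)[1/p] → ((M ⊗_A B)^∧)[1/p], obtained by inverting p in the natural map from M ⊗_A B to its p-adic completion (M ⊗_A B)^∧, is bijective; equivalently, there is a natural isomorphism M[1/p] ⊗_A B ≅ ((M ⊗_A B)^∧)[1/p]. -/
open scoped TensorProduct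

/-!
Choose a surjection `π : A^n → M`. A section of `π[1/p]` exists because `M[1/p]` is projective;
clearing denominators, and using that `A^n` has no `p`-torsion to descend along `π`, gives
`u : M → A^n` with `π ∘ u = p^k`. After base change, `B ⊗ M` is a quotient of the `p`-adically
complete module `B^n`, so `B ⊗ M → (B ⊗ M)^∧` is surjective; and `u ⊗ B` carries its kernel into
the (zero) kernel for `B^n`, so that kernel is killed by `p^k`. Both facts survive inverting `p`.
-/

open LocalizedModule in
theorem Module.exists_comp_eq_smul_id_of_projective_localizedModule
    {R M : Type*} [CommRing R] [AddCommGroup M] [Module R M] (S : Submonoid R)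
    (hS : S ≤ nonZeroDivisors R) [Module.Projective (Localization S) (LocalizedModule S M)]
    {n : ℕ} (π : (Fin n → R) →ₗ[R] M) (hπ : Function.Surjective π) :
    ∃ (s : S) (u : M →ₗ[R] Fin n → R), π ∘ₗ u = s • LinearMap.id := by
  have : Module.Finite R M := Module.Finite.of_surjective π hπ
  obtain ⟨σ, hσ⟩ := Module.projective_lifting_property (map S π) LinearMap.id
    (map_surjective S π hπ)
  obtain ⟨h, s, hh⟩ := Module.FinitePresentation.exists_lift_of_isLocalizedModule S
    (mkLinearMap S (Fin n → R)) (σ.restrictScalars R ∘ₗ mkLinearMap S M ∘ₗ π)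
  have hker : LinearMap.ker π ≤ LinearMap.ker h := by
    intro x hx
    have hx0 : mkLinearMap S (Fin n → R) (h x) = 0 := by
      simpa [LinearMap.mem_ker.mp hx] using LinearMap.congr_fun hh x
    obtain ⟨t, ht⟩ := (IsLocalizedModule.eq_zero_iff S _).mp hx0
    funext j
    exact (hS t.2).2 _ (by simpa [Submonoid.smul_def, mul_comm] using congr_fun ht j)
  let u := (LinearMap.ker π).liftQ h hker ∘ₗ (π.quotKerEquivOfSurjective hπ).symm.toLinearMap
  have hu (x : Fin n → R) : u (π x) = h x := by
    simp [u, LinearMap.quotKerEquivOfSurjective_symm_apply]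
  have hloc : mkLinearMap S M ∘ₗ π ∘ₗ u = mkLinearMap S M ∘ₗ (s • LinearMap.id) := by
    rw [← LinearMap.cancel_right hπ]
    refine LinearMap.ext fun x => ?_
    have := congr_arg (map S π) (LinearMap.congr_fun hh x)
    simpa [hu, ← LinearMap.comp_apply (map S π) σ, hσ] using this
  obtain ⟨t, ht⟩ := Module.Finite.exists_smul_of_comp_eq_of_isLocalizedModule S
    (mkLinearMap S M) _ _ hloc
  exact ⟨t * s, t • u, by rw [LinearMap.comp_smul, ht, mul_smul]⟩

theorem LinearMap.baseChange_comp_eq_smul_id {R A M P : Type*} [CommRing R] [CommRing A]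
    [Algebra R A] [AddCommGroup M] [Module R M] [AddCommGroup P] [Module R P]
    {π : P →ₗ[R] M} {u : M →ₗ[R] P} {s : R} (h : π ∘ₗ u = s • LinearMap.id) :
    π.baseChange A ∘ₗ u.baseChange A = algebraMap R A s • LinearMap.id := by
  rw [← LinearMap.baseChange_comp, h, LinearMap.baseChange_smul, LinearMap.baseChange_id]
  ext x
  simp [algebraMap_smul]

namespace AdicCompletion

variable {R : Type*} [CommRing R] (I : Ideal R)

theorem isAdicComplete_pi {ι : Type*} [Finite ι] {M : ι → Type*} [∀ j, AddCommGroup (M j)]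
    [∀ j, Module R (M j)] [∀ j, IsAdicComplete I (M j)] : IsAdicComplete I (∀ j, M j) := by
  classical
  have := Fintype.ofFinite ι
  have hof : ⇑(of I (∀ j, M j)) = (piEquivOfFintype I M).symm ∘ Pi.map fun j => of I (M j) := by
    funext x
    rw [Function.comp_apply, LinearEquiv.eq_symm_apply, piEquivOfFintype_apply]
    funext j
    simp only [pi, LinearMap.pi_apply, map_of, LinearMap.proj_apply, Pi.map_apply]
  rw [← of_bijective_iff, hof]
  exact (piEquivOfFintype I M).symm.bijective.comp
    (Function.Bijective.piMap fun j => of_bijective I (M j))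

variable {I} {P N : Type*} [AddCommGroup P] [Module R P] [AddCommGroup N] [Module R N]

theorem smul_eq_zero_of_of_eq_zero [IsHausdorff I P] {π : P →ₗ[R] N} {u : N →ₗ[R] P} {r : R}
    (h : π ∘ₗ u = r • LinearMap.id) {x : N} (hx : of I N x = 0) : r • x = 0 := by
  have hux : u x = 0 := of_injective I P <| by rw [← map_of, hx, _root_.map_zero, _root_.map_zero]
  simpa [hux] using (LinearMap.congr_fun h x).symm

end AdicCompletion

open AdicCompletion in
theorem IsPrecomplete.of_surjective {R P N : Type*} [CommRing R] {I : Ideal R} [AddCommGroup P]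
    [Module R P] [AddCommGroup N] [Module R N] [IsPrecomplete I P] {π : P →ₗ[R] N}
    (hπ : Function.Surjective π) : IsPrecomplete I N := by
  rw [← of_surjective_iff]
  intro z
  obtain ⟨w, rfl⟩ := map_surjective I hπ z
  obtain ⟨x, rfl⟩ := AdicCompletion.of_surjective I P w
  exact ⟨π x, (map_of I π x).symm⟩

theorem LocalizedModule.map_bijective_of_surjective_of_ker_torsion {R M N : Type*} [CommRing R]
    [AddCommGroup M] [Module R M] [AddCommGroup N] [Module R N] (S : Submonoid R)
    {f : M →ₗ[R] N} (hf : Function.Surjective f) (hker : ∀ x, f x = 0 → ∃ s : S, s • x = 0) :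
    Function.Bijective (map S f) := by
  refine ⟨(injective_iff_map_eq_zero _).mpr fun y hy => ?_, map_surjective S f hf⟩
  induction y using induction_on with
  | h m s =>
    rw [map_mk, IsLocalizedModule.mk_eq_mk', IsLocalizedModule.mk'_eq_zero'] at hy
    obtain ⟨t, ht⟩ := hy
    obtain ⟨t', ht'⟩ := hker (t • m) (by rwa [LinearMap.map_smul_of_tower])
    rw [IsLocalizedModule.mk_eq_mk', IsLocalizedModule.mk'_eq_zero']
    exact ⟨t' * t, by rwa [mul_smul]⟩

theorem localized_adicCompletion_of_baseChange_bijective_general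
    (p : ℕ)
    {A B : Type*} [CommRing A] [CommRing B] [Algebra A B]
    (hAtf : Function.Injective fun a : A => (p : A) * a)
    (hBcomplete : IsAdicComplete (Ideal.span {(p : B)}) B)
    {M : Type*} [AddCommGroup M] [Module A M] [Module.Finite A M]
    (hMproj : Module.Projective (Localization (Submonoid.powers (p : A)))
      (LocalizedModule (Submonoid.powers (p : A)) M)) :
    Function.Bijective
      (LocalizedModule.map (Submonoid.powers (p : B))
        (AdicCompletion.of (Ideal.span {(p : B)}) (B ⊗[A] M))) := by
  have hpA : (p : A) ∈ nonZeroDivisors A :=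
    mem_nonZeroDivisors_iff_right.mpr fun x hx => hAtf (by simpa [mul_comm] using hx)
  obtain ⟨n, π, hπ⟩ := Module.Finite.exists_fin' A M
  obtain ⟨⟨s, k, rfl⟩, u, hu⟩ := Module.exists_comp_eq_smul_id_of_projective_localizedModule
    _ (Submonoid.powers_le.mpr hpA) π hπ
  let e := TensorProduct.piScalarRight A B B (Fin n)
  have hπB : Function.Surjective (π.baseChange B ∘ₗ e.symm.toLinearMap) :=
    (LinearMap.baseChange_surjective B hπ).comp e.symm.surjective
  have huB : (π.baseChange B ∘ₗ e.symm.toLinearMap) ∘ₗ (e.toLinearMap ∘ₗ u.baseChange B) =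
      ((p : B) ^ k) • LinearMap.id := by
    simpa [LinearMap.comp_assoc] using LinearMap.baseChange_comp_eq_smul_id (A := B) hu
  have : IsAdicComplete (Ideal.span {(p : B)}) (Fin n → B) := AdicCompletion.isAdicComplete_pi _
  have : IsPrecomplete (Ideal.span {(p : B)}) (B ⊗[A] M) := .of_surjective hπB
  refine LocalizedModule.map_bijective_of_surjective_of_ker_torsion _
    (AdicCompletion.of_surjective _ _) fun x hx => ⟨⟨(p : B) ^ k, k, rfl⟩, ?_⟩
  exact AdicCompletion.smul_eq_zero_of_of_eq_zero huB hx

/-- **Completed base change and inverting `p`.** Let `p` be a prime and `A → B` a homomorphism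
of commutative rings, with `A` `p`-adically complete and `p`-torsion free and `B` `p`-adically
complete. Let `M` be a finitely generated `A`-module such that `M[1/p]` is a finite projective
`A[1/p]`-module. Then the canonical map `(M ⊗_A B)[1/p] → ((M ⊗_A B)^∧)[1/p]`, obtained by
inverting `p` in the natural map from `M ⊗_A B` to its `p`-adic completion, is bijective. -/
theorem localized_adicCompletion_of_baseChange_bijective
    (p : ℕ) (hp : p.Prime)
    {A B : Type*} [CommRing A] [CommRing B] [Algebra A B]
    (hAcomplete : IsAdicComplete (Ideal.span {(p : A)}) A)
    (hAtf : Function.Injective fun a : A => (p : A) * a)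
    (hBcomplete : IsAdicComplete (Ideal.span {(p : B)}) B)
    {M : Type*} [AddCommGroup M] [Module A M] [Module.Finite A M]
    (hMfin : Module.Finite (Localization (Submonoid.powers (p : A)))
      (LocalizedModule (Submonoid.powers (p : A)) M))
    (hMproj : Module.Projective (Localization (Submonoid.powers (p : A)))
      (LocalizedModule (Submonoid.powers (p : A)) M)) :
    Function.Bijective
      (LocalizedModule.map (Submonoid.powers (p : B))
        (AdicCompletion.of (Ideal.span {(p : B)}) (B ⊗[A] M))) :=
  localized_adicCompletion_of_baseChange_bijective_general p hAtf hBcomplete hMproj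
end

section
/- Let p be a prime and A a p-adically complete, p-torsion free commutative ring. Let M be a finitely generated p-torsion free A-module such that M[1/p] is a finite projective A[1/p]-module. Then M is p-adically complete, i.e. the canonical map M → lim_n M/p^n M is bijective. -/
/-!
Precompleteness passes from `A` to any finite `A`-module. For separatedness: `M` is
`p`-torsion free, so it embeds into `M[1/p]`, which is a direct summand of some `A[1/p]ⁿ`;
as `M` is finitely generated, clearing a common denominator gives an `A`-linear embedding
of `M` into `Aⁿ`, and submodules of the separated module `Aⁿ` are separated.
-/

open Function

section Adic

variable {R : Type*} [CommRing R] {I : Ideal R}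
variable {M : Type*} [AddCommGroup M] [Module R M] {N : Type*} [AddCommGroup N] [Module R N]

theorem IsPrecomplete.of_finite [IsPrecomplete I R] [Module.Finite R M] :
    IsPrecomplete I M := by
  rw [← AdicCompletion.of_surjective_iff]
  intro y
  obtain ⟨t, rfl⟩ := AdicCompletion.ofTensorProduct_surjective_of_finite I M y
  induction t using TensorProduct.induction_on with
  | zero => exact ⟨0, by simp⟩
  | tmul r x =>
    obtain ⟨a, rfl⟩ := AdicCompletion.of_surjective I R r
    refine ⟨a • x, ?_⟩
    rw [AdicCompletion.ofTensorProduct_tmul, map_smul, ← algebraMap_smul (AdicCompletion I R)]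
    rfl
  | add t u ht hu =>
    obtain ⟨x, hx⟩ := ht
    obtain ⟨y, hy⟩ := hu
    exact ⟨x + y, by rw [map_add, hx, hy, map_add]⟩

theorem SModEq.map_smul_top {x y : M} (h : x ≡ y [SMOD (I • ⊤ : Submodule R M)])
    (f : M →ₗ[R] N) : f x ≡ f y [SMOD (I • ⊤ : Submodule R N)] :=
  (h.map f).mono (Submodule.map_le_iff_le_comap.2 (Submodule.smul_top_le_comap_smul_top I f))

theorem IsHausdorff.of_injective [IsHausdorff I N] {f : M →ₗ[R] N} (hf : Injective f) :
    IsHausdorff I M :=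
  ⟨fun x hx => hf <| by
    simpa using IsHausdorff.haus ‹_› (f x) fun n => by simpa using (hx n).map_smul_top f⟩

instance IsHausdorff.pi {ι : Type*} {M : ι → Type*} [∀ i, AddCommGroup (M i)]
    [∀ i, Module R (M i)] [∀ i, IsHausdorff I (M i)] : IsHausdorff I (∀ i, M i) :=
  ⟨fun x hx => _root_.funext fun i =>
    IsHausdorff.haus inferInstance (x i) fun n => by
      simpa using (hx n).map_smul_top (LinearMap.proj i)⟩

end Adic

section Localization

variable {R : Type*} [CommRing R] (S : Submonoid R)
variable {M : Type*} [AddCommGroup M] [Module R M]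
variable {N N' : Type*} [AddCommGroup N] [Module R N] [AddCommGroup N'] [Module R N']

theorem IsSMulRegular.of_mem_powers {a : R} (ha : IsSMulRegular M a) (s : Submonoid.powers a) :
    IsSMulRegular M (s : R) := by
  obtain ⟨k, hk⟩ := s.2
  rw [← hk]
  exact ha.pow k

theorem IsLocalizedModule.exists_range_smul_le_range (f : N →ₗ[R] N') [IsLocalizedModule S f]
    [Module.Finite R M] (ψ : M →ₗ[R] N') :
    ∃ s : S, LinearMap.range ((s : R) • ψ) ≤ LinearMap.range f := by
  obtain ⟨t, ht⟩ := Module.Finite.fg_top (R := R) (M := M)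
  obtain ⟨s, hs⟩ := IsLocalizedModule.exist_integer_multiples S f t ψ
  refine ⟨s, ?_⟩
  rw [LinearMap.range_eq_map, ← ht, Submodule.map_span_le]
  exact fun x hx => hs x hx

theorem IsLocalizedModule.exists_injective_of_injective {f : N →ₗ[R] N'} [IsLocalizedModule S f]
    [Module.Finite R M] (hf : Injective f) {ψ : M →ₗ[R] N'} (hψ : Injective ψ) :
    ∃ g : M →ₗ[R] N, Injective g := by
  obtain ⟨s, hs⟩ := IsLocalizedModule.exists_range_smul_le_range S f ψ
  have hsψ : Injective ((s : R) • ψ) :=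
    ((Module.End.isUnit_iff _).mp (IsLocalizedModule.map_units f s)).1.comp hψ
  refine ⟨LinearMap.codRestrictOfInjective _ f hf fun x => hs ⟨x, rfl⟩,
    .of_comp (f := f) ?_⟩
  rwa [← LinearMap.coe_comp, LinearMap.codRestrictOfInjective_comp]

theorem exists_injective_linearMap_fin_of_projective_localizedModule
    (hR : ∀ s : S, IsSMulRegular R (s : R)) (hM : ∀ s : S, IsSMulRegular M (s : R))
    [Module.Finite R M] [Module.Projective (Localization S) (LocalizedModule S M)] :
    ∃ (n : ℕ) (g : M →ₗ[R] Fin n → R), Injective g := by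
  obtain ⟨n, -, σ, -, hσ, -⟩ :=
    Module.Finite.exists_comp_eq_id_of_projective (Localization S) (LocalizedModule S M)
  let f : (Fin n → R) →ₗ[R] Fin n → Localization S :=
    .pi fun i => Algebra.linearMap R (Localization S) ∘ₗ .proj i
  have hf : Injective f := (IsLocalizedModule.injective_iff_isRegular S f).2 fun s _ _ h =>
    funext fun i => hR s (congrFun h i)
  have hmk : Injective (LocalizedModule.mkLinearMap S M) :=
    (IsLocalizedModule.injective_iff_isRegular S _).2 hM
  exact ⟨n, IsLocalizedModule.exists_injective_of_injective S hf
    (ψ := σ.restrictScalars R ∘ₗ LocalizedModule.mkLinearMap S M) (hσ.comp hmk)⟩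

end Localization

theorem isAdicComplete_of_localization_finite_projective_general
    (p : ℕ)
    {A : Type*} [CommRing A]
    (hAcomplete : IsAdicComplete (Ideal.span {(p : A)}) A)
    (hAtf : Function.Injective fun a : A => (p : A) * a)
    {M : Type*} [AddCommGroup M] [Module A M] [Module.Finite A M]
    (hMtf : Function.Injective fun x : M => (p : A) • x)
    (hMproj : Module.Projective (Localization (Submonoid.powers (p : A)))
      (LocalizedModule (Submonoid.powers (p : A)) M)) :
    IsAdicComplete (Ideal.span {(p : A)}) M := by
  have hp : IsSMulRegular A (p : A) := hAtf
  obtain ⟨n, g, hg⟩ := exists_injective_linearMap_fin_of_projective_localizedModule _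
    hp.of_mem_powers (IsSMulRegular.of_mem_powers hMtf)
  exact { toIsHausdorff := .of_injective hg, toIsPrecomplete := .of_finite }

/-- **Automatic `p`-adic completeness.** Let `p` be a prime and `A` a `p`-adically complete,
`p`-torsion free commutative ring. Let `M` be a finitely generated `p`-torsion free `A`-module
such that `M[1/p]` is a finite projective `A[1/p]`-module. Then `M` is `p`-adically complete,
i.e. the canonical map `M → lim_n M/p^n M` is bijective. -/
theorem isAdicComplete_of_localization_finite_projective
    (p : ℕ) (hp : p.Prime)
    {A : Type*} [CommRing A]
    (hAcomplete : IsAdicComplete (Ideal.span {(p : A)}) A)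
    (hAtf : Function.Injective fun a : A => (p : A) * a)
    {M : Type*} [AddCommGroup M] [Module A M] [Module.Finite A M]
    (hMtf : Function.Injective fun x : M => (p : A) • x)
    (hMfin : Module.Finite (Localization (Submonoid.powers (p : A)))
      (LocalizedModule (Submonoid.powers (p : A)) M))
    (hMproj : Module.Projective (Localization (Submonoid.powers (p : A)))
      (LocalizedModule (Submonoid.powers (p : A)) M)) :
    IsAdicComplete (Ideal.span {(p : A)}) M :=
  isAdicComplete_of_localization_finite_projective_general p hAcomplete hAtf hMtf hMproj
end

section
/- Let n ≥ 1 be an integer, P a uniquely n-divisible commutative monoid, and π : Q → R a surjective homomorphism of commutative monoids. Assume there exists an integer k ≥ 1 such that for all q₁, q₂ ∈ Q with π(q₁) = π(q₂) one has q₁^(n^k) = q₂^(n^k). Then the map Hom(P, Q) → Hom(P, R) given by composition with π is bijective. -/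
open Function

lemma Function.Bijective.pow_pow {M : Type*} [Monoid M] {n : ℕ}
    (h : Bijective fun x : M => x ^ n) (k : ℕ) : Bijective fun x : M => x ^ n ^ k :=
  pow_iterate (M := M) n k ▸ h.iterate k

/-- `L r` is the `N`-th power of any preimage of `r`. -/
lemma MonoidHom.exists_comp_eq_powMonoidHom {Q R : Type*} [CommMonoid Q] [CommMonoid R]
    {π : Q →* R} (hπ : Surjective π) {N : ℕ}
    (hN : ∀ q₁ q₂ : Q, π q₁ = π q₂ → q₁ ^ N = q₂ ^ N) :
    ∃ L : R →* Q, π.comp L = powMonoidHom N ∧ L.comp π = powMonoidHom N := by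
  have hs : ∀ r, π (surjInv hπ r) = r := surjInv_eq hπ
  let L : R →* Q :=
    { toFun r := surjInv hπ r ^ N
      map_one' := by rw [hN _ 1 (by rw [hs, map_one]), one_pow]
      map_mul' r s := by rw [← mul_pow]; exact hN _ _ (by rw [map_mul, hs, hs, hs]) }
  refine ⟨L, ?_, ?_⟩ <;> ext x
  · simp [L, hs]
  · exact hN _ _ (hs _)

lemma MonoidHom.comp_left_bijective_of_comp_eq_powMonoidHom {P Q R : Type*} [CommMonoid P]
    [CommMonoid Q] [CommMonoid R] {N : ℕ} (hP : Bijective fun x : P => x ^ N)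
    (π : Q →* R) (L : R →* Q) (hπL : π.comp L = powMonoidHom N)
    (hLπ : L.comp π = powMonoidHom N) :
    Bijective fun f : P →* Q => π.comp f := by
  let root : P →* P := (MulEquiv.ofBijective (powMonoidHom N) hP).symm.toMonoidHom
  have hroot : ∀ x, root x ^ N = x :=
    fun x => MulEquiv.ofBijective_apply_symm_apply (powMonoidHom N) hP
  -- The inverse is `g ↦ L ∘ g ∘ root`, where `root` inverts `x ↦ x ^ N` on `P`.
  refine bijective_iff_has_inverse.mpr ⟨fun g => L.comp (g.comp root), fun f => ?_, fun g => ?_⟩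
  all_goals ext x
  · calc L (π (f (root x))) = f (root x) ^ N := DFunLike.congr_fun hLπ _
      _ = f x := by rw [← map_pow, hroot]
  · calc π (L (g (root x))) = g (root x) ^ N := DFunLike.congr_fun hπL _
      _ = g x := by rw [← map_pow, hroot]

theorem monoidHom_comp_surjection_bijective_general
    {P Q R : Type*} [CommMonoid P] [CommMonoid Q] [CommMonoid R]
    (n : ℕ)
    (hP : Function.Bijective fun x : P => x ^ n)
    (π : Q →* R) (hπ : Function.Surjective π)
    (hk : ∃ k : ℕ, 1 ≤ k ∧ ∀ q₁ q₂ : Q, π q₁ = π q₂ → q₁ ^ n ^ k = q₂ ^ n ^ k) :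
    Function.Bijective fun f : P →* Q => π.comp f := by
  obtain ⟨k, -, hQ⟩ := hk
  obtain ⟨L, hπL, hLπ⟩ := π.exists_comp_eq_powMonoidHom hπ hQ
  exact π.comp_left_bijective_of_comp_eq_powMonoidHom (hP.pow_pow k) L hπL hLπ

/-- **Monoid-lifting lemma.** Let `n ≥ 1`, let `P` be a uniquely `n`-divisible commutative
monoid, and let `π : Q → R` be a surjective homomorphism of commutative monoids. Assume there
is `k ≥ 1` such that `π q₁ = π q₂` implies `q₁ ^ (n ^ k) = q₂ ^ (n ^ k)`. Then composition with
`π` defines a bijection `Hom(P, Q) → Hom(P, R)`. -/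
theorem monoidHom_comp_surjection_bijective
    {P Q R : Type*} [CommMonoid P] [CommMonoid Q] [CommMonoid R]
    (n : ℕ) (hn : 1 ≤ n)
    (hP : Function.Bijective fun x : P => x ^ n)
    (π : Q →* R) (hπ : Function.Surjective π)
    (hk : ∃ k : ℕ, 1 ≤ k ∧ ∀ q₁ q₂ : Q, π q₁ = π q₂ → q₁ ^ n ^ k = q₂ ^ n ^ k) :
    Function.Bijective fun f : P →* Q => π.comp f :=
  monoidHom_comp_surjection_bijective_general n hP π hπ hk
end

section
/- Let n ≥ 1 be an integer, A a commutative ring, and I an ideal of A such that I^k = 0 for some k ≥ 1 and such that the image of n in A lies in I. Let P be a uniquely n-divisible commutative monoid. Then the map Hom(P, (A, ·)) → Hom(P, (A/I, ·)), induced by the quotient map A → A/I on underlying multiplicative monoids, is bijective. -/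
/-! If `a ≡ b mod I` and `n ∈ I`, then `a ^ n - b ^ n` is `a - b` times an element of `I`, so by
induction `a ^ n ^ m = b ^ n ^ m` as soon as `I ^ (m + 1) = 0`. Hence `u ↦ (any lift of u) ^ n ^ m`
is a well-defined multiplicative map `A ⧸ I → A` lifting the `n ^ m`-th power map. Since
`x ↦ x ^ n ^ m` is bijective on `P`, a homomorphism `g : P → A ⧸ I` lifts as
`x ↦ (lift of g (x ^ (1 / n ^ m))) ^ n ^ m`, and two lifts agree on `n ^ m`-th powers, i.e.
everywhere. -/

open Function

namespace Ideal

variable {R : Type*} [CommRing R] {I J : Ideal R} {n : ℕ} {a b : R}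

theorem pow_sub_pow_mem_mul (hn : (n : R) ∈ I) (hI : a - b ∈ I) (hJ : a - b ∈ J) :
    a ^ n - b ^ n ∈ I * J := by
  rw [← geom_sum₂_mul]
  refine mul_mem_mul ?_ hJ
  rw [← Quotient.eq_zero_iff_mem, RingHom.map_geom_sum₂, Quotient.eq.mpr hI,
    geom_sum₂_self, ← map_natCast (Quotient.mk I), Quotient.eq_zero_iff_mem.mpr hn, zero_mul]

theorem pow_pow_sub_pow_pow_mem_pow (hn : (n : R) ∈ I) (h : a - b ∈ I) (m : ℕ) :
    a ^ n ^ m - b ^ n ^ m ∈ I ^ (m + 1) := by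
  induction m with
  | zero => simpa using h
  | succ m ih =>
    rw [pow_succ n, pow_mul, pow_mul, pow_succ' I]
    exact pow_sub_pow_mem_mul hn (pow_le_self m.succ_ne_zero ih) ih

theorem pow_pow_eq_of_sub_mem (hn : (n : R) ∈ I) {m : ℕ} (hI : I ^ (m + 1) = ⊥) (h : a - b ∈ I) :
    a ^ n ^ m = b ^ n ^ m := by
  simpa [hI, sub_eq_zero] using pow_pow_sub_pow_pow_mem_pow hn h m

end Ideal

namespace MonoidHom

variable {M N P : Type*} [CommMonoid M] [Monoid N] [CommMonoid P] (π : M →* N) {e : ℕ}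

noncomputable def powLift (hπ : Surjective π) (he : ∀ a b, π a = π b → a ^ e = b ^ e) : N →* M where
  toFun u := surjInv hπ u ^ e
  map_one' := by
    rw [he _ 1 (by rw [surjInv_eq hπ, map_one]), one_pow]
  map_mul' u v := by
    rw [he _ (surjInv hπ u * surjInv hπ v) (by simp only [surjInv_eq hπ, map_mul]), mul_pow]

theorem map_powLift (hπ : Surjective π) (he : ∀ a b, π a = π b → a ^ e = b ^ e) (u : N) :
    π (powLift π hπ he u) = u ^ e := by
  simp [powLift, surjInv_eq hπ]

theorem comp_injective_of_pow_eq (he : ∀ a b, π a = π b → a ^ e = b ^ e)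
    (hP : Surjective fun x : P => x ^ e) : Injective fun f : P →* M => π.comp f := by
  intro f g hfg
  ext x
  obtain ⟨y, rfl⟩ := hP x
  simpa only [map_pow] using he _ _ (DFunLike.congr_fun hfg y)

theorem comp_surjective_of_pow_eq (hπ : Surjective π) (he : ∀ a b, π a = π b → a ^ e = b ^ e)
    (hP : Bijective fun x : P => x ^ e) : Surjective fun f : P →* M => π.comp f := by
  intro g
  let root : P ≃* P := MulEquiv.ofBijective (powMonoidHom e) hP
  refine ⟨(powLift π hπ he).comp (g.comp root.symm.toMonoidHom), ?_⟩
  ext x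
  change π (powLift π hπ he (g (root.symm x))) = g x
  rw [map_powLift, ← map_pow]
  exact congrArg g (root.apply_symm_apply x)

theorem comp_bijective_of_pow_eq (hπ : Surjective π) (he : ∀ a b, π a = π b → a ^ e = b ^ e)
    (hP : Bijective fun x : P => x ^ e) : Bijective fun f : P →* M => π.comp f :=
  ⟨comp_injective_of_pow_eq π he hP.2, comp_surjective_of_pow_eq π hπ he hP⟩

end MonoidHom

theorem monoidHom_comp_quotient_mk_bijective_general
    {A : Type*} [CommRing A] (n : ℕ) (I : Ideal A)
    (hI : ∃ k : ℕ, 1 ≤ k ∧ I ^ k = ⊥) (hnI : (n : A) ∈ I)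
    {P : Type*} [CommMonoid P]
    (hP : Function.Bijective fun x : P => x ^ n) :
    Function.Bijective fun f : P →* A => (Ideal.Quotient.mk I).toMonoidHom.comp f := by
  obtain ⟨k, hk, hIk⟩ := hI
  obtain ⟨m, rfl⟩ : ∃ m, k = m + 1 := ⟨k - 1, by omega⟩
  refine MonoidHom.comp_bijective_of_pow_eq _ Ideal.Quotient.mk_surjective
    (fun a b hab => Ideal.pow_pow_eq_of_sub_mem hnI hIk (Ideal.Quotient.eq.mp hab)) ?_
  rw [← pow_iterate]
  exact hP.iterate m

/-- **Monoid-lifting lemma for nilpotent ring quotients.** Let `n ≥ 1`, `A` a commutative ring,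
`I` an ideal with `I ^ k = 0` for some `k ≥ 1` and with `n ∈ I`, and let `P` be a uniquely
`n`-divisible commutative monoid. Then composition with the quotient map `A → A/I` (as a map of
underlying multiplicative monoids) gives a bijection `Hom(P, (A, ·)) → Hom(P, (A/I, ·))`. -/
theorem monoidHom_comp_quotient_mk_bijective
    {A : Type*} [CommRing A] (n : ℕ) (hn : 1 ≤ n) (I : Ideal A)
    (hI : ∃ k : ℕ, 1 ≤ k ∧ I ^ k = ⊥) (hnI : (n : A) ∈ I)
    {P : Type*} [CommMonoid P]
    (hP : Function.Bijective fun x : P => x ^ n) :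
    Function.Bijective fun f : P →* A => (Ideal.Quotient.mk I).toMonoidHom.comp f :=
  monoidHom_comp_quotient_mk_bijective_general n I hI hnI hP
end

section
/- Let p be a prime, A a commutative ring that is p-adically separated (i.e. ⋂_{n≥1} p^n A = 0), M a commutative monoid, and δ : M → A a function satisfying δ(m m') = δ(m) + δ(m') + p·δ(m)·δ(m') for all m, m' ∈ M. If m ∈ M admits a p^n-th root for every n ≥ 1 (i.e. for every n there exists m_n ∈ M with m_n^(p^n) = m), then δ(m) = 0. -/
/-! Writing `z ^ p = z * ⋯ * z`, the twisted additivity of `δ` gives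
`δ (z ^ p) = p * δ z + p * δ z ^ 2 * t = p * δ z * (1 + δ z * t)`, so `δ (z ^ p)` is divisible by
`p * δ z`. Iterating, `p ^ n ∣ δ (y ^ p ^ n)`; hence `δ m` lies in every `p ^ n A` and vanishes by
separatedness. -/

section DeltaLog

variable {p : ℕ} {A : Type*} [CommRing A] {M : Type*} [CommMonoid M] {δ : M → A}

lemma exists_deltaLog_pow_succ_eq
    (hδ : ∀ m m' : M, δ (m * m') = δ m + δ m' + (p : A) * δ m * δ m') (z : M) (k : ℕ) :
    ∃ t : A, δ (z ^ (k + 1)) = (k + 1) * δ z + p * δ z ^ 2 * t := by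
  induction k with
  | zero => exact ⟨0, by simp⟩
  | succ k ih =>
    obtain ⟨t, ht⟩ := ih
    refine ⟨t + (k + 1) + p * δ z * t, ?_⟩
    rw [pow_succ, hδ, ht]
    push_cast
    ring

lemma mul_deltaLog_dvd_deltaLog_pow
    (hδ : ∀ m m' : M, δ (m * m') = δ m + δ m' + (p : A) * δ m * δ m') (hp : 0 < p) (z : M) :
    (p : A) * δ z ∣ δ (z ^ p) := by
  obtain ⟨k, rfl⟩ := Nat.exists_eq_add_of_lt hp
  obtain ⟨t, ht⟩ := exists_deltaLog_pow_succ_eq hδ z k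
  exact ⟨1 + δ z * t, by rw [zero_add, ht]; push_cast; ring⟩

lemma pow_dvd_deltaLog_pow_pow
    (hδ : ∀ m m' : M, δ (m * m') = δ m + δ m' + (p : A) * δ m * δ m') (hp : 0 < p) (z : M)
    (n : ℕ) : (p : A) ^ n ∣ δ (z ^ p ^ n) := by
  induction n with
  | zero => simp
  | succ n ih =>
    calc (p : A) ^ (n + 1) ∣ p * δ (z ^ p ^ n) := by
          rw [pow_succ']
          exact mul_dvd_mul_left _ ih
      _ ∣ δ ((z ^ p ^ n) ^ p) := mul_deltaLog_dvd_deltaLog_pow hδ hp _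
      _ = δ (z ^ p ^ (n + 1)) := by rw [← pow_mul, pow_succ]

end DeltaLog

/-- **δ_log vanishes on `p`-divisible elements.** Let `p` be a prime, `A` a commutative ring
which is `p`-adically separated (`⋂_{n ≥ 1} p^n A = 0`), `M` a commutative monoid and
`δ : M → A` a function satisfying `δ (m * m') = δ m + δ m' + p * δ m * δ m'`. If `m ∈ M` admits
a `p^n`-th root for every `n ≥ 1`, then `δ m = 0`. -/
theorem deltaLog_eq_zero_of_p_divisible
    (p : ℕ) (hp : p.Prime)
    {A : Type*} [CommRing A]
    (hsep : ∀ a : A, (∀ n : ℕ, 1 ≤ n → a ∈ Ideal.span {(p : A) ^ n}) → a = 0)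
    {M : Type*} [CommMonoid M]
    (δ : M → A)
    (hδ : ∀ m m' : M, δ (m * m') = δ m + δ m' + (p : A) * δ m * δ m')
    (m : M) (hm : ∀ n : ℕ, 1 ≤ n → ∃ y : M, y ^ p ^ n = m) :
    δ m = 0 := by
  refine hsep _ fun n hn => ?_
  obtain ⟨y, rfl⟩ := hm n hn
  exact Ideal.mem_span_singleton.mpr (pow_dvd_deltaLog_pow_pow hδ hp.pos y n)
end

section
/- Let p be a prime, A a p-torsion free commutative ring, and M a finitely generated p-torsion free A-module such that M[1/p] is a finite projective A[1/p]-module. Then there exist an integer r ≥ 0, an injective A-linear map ι : M → A^r, and an A[1/p]-linear map ρ : (A[1/p])^r → M[1/p] such that ρ composed with the map M[1/p] → (A[1/p])^r induced by ι is the identity of M[1/p] (i.e. the localization of ι admits an A[1/p]-linear retraction). -/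
/-!
Localizing a surjection `A^k → M` gives a surjection `A[1/p]^k → M[1/p]`, which splits by
projectivity. Since `M` is `p`-torsion free it embeds in `M[1/p]`, and the section maps it
into `A[1/p]^k`; as `M` is finitely generated, one power `p^n` clears all denominators of its
image, so `p^n` times the section lands in `A^k`, which embeds in `A[1/p]^k` because `A` is
`p`-torsion free. This is `ι`, and `p^{-n}` times the localized surjection is the retraction.
-/

open Function

section

variable {A N N' M : Type*} [CommSemiring A] [AddCommMonoid N] [Module A N]
  [AddCommMonoid N'] [Module A N'] [AddCommMonoid M] [Module A M]

theorem LinearMap.exists_comp_eq_of_range_le_of_injective {F : N →ₗ[A] N'} (hF : Injective F)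
    {f : M →ₗ[A] N'} (hf : range f ≤ range F) : ∃ g : M →ₗ[A] N, F ∘ₗ g = f :=
  ⟨(LinearEquiv.ofInjective F hF).symm.toLinearMap ∘ₗ f.codRestrict _ fun m => hf ⟨m, rfl⟩,
    by ext m; simp⟩

theorem IsLocalizedModule.exists_comp_eq_smul_of_injective (S : Submonoid A) [Module.Finite A M]
    (F : N →ₗ[A] N') [IsLocalizedModule S F] (hF : Injective F) (h : M →ₗ[A] N') :
    ∃ (s : S) (g : M →ₗ[A] N), F ∘ₗ g = (s : A) • h := by
  obtain ⟨k, gens, hgens⟩ := Module.Finite.exists_fin (R := A) (M := M)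
  obtain ⟨s, hs⟩ := exist_integer_multiples_of_finite S F (h ∘ gens)
  refine ⟨s, LinearMap.exists_comp_eq_of_range_le_of_injective hF ?_⟩
  rw [LinearMap.range_eq_map, ← hgens, Submodule.map_span_le]
  rintro _ ⟨j, rfl⟩
  exact hs j

theorem IsLocalizedModule.injective_of_comp_eq_smul {S : Submonoid A} (F : N →ₗ[A] N')
    [IsLocalizedModule S F] {g : M →ₗ[A] N} {h : M →ₗ[A] N'} (s : S)
    (hgh : F ∘ₗ g = (s : A) • h) (hh : Injective h) : Injective g := by
  intro m m' e
  apply hh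
  apply ((Module.End.isUnit_iff _).mp (map_units F s)).1
  simp only [Module.algebraMap_end_apply, ← LinearMap.smul_apply, ← hgh, LinearMap.comp_apply, e]

end

theorem LocalizedModule.mkLinearMap_powers_injective {A M : Type*} [CommSemiring A]
    [AddCommMonoid M] [Module A M] {x : A} (hx : IsSMulRegular M x) :
    Injective (mkLinearMap (Submonoid.powers x) M) := by
  rw [IsLocalizedModule.injective_iff_isRegular (Submonoid.powers x)]
  rintro ⟨_, n, rfl⟩
  exact hx.pow n

theorem LocalizedModule.map_eq_smul_of_comp_eq {A M N : Type*} [CommSemiring A] (S : Submonoid A)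
    [AddCommMonoid M] [Module A M] [AddCommMonoid N] [Module A N] {g : M →ₗ[A] N}
    {j : LocalizedModule S M →ₗ[Localization S] LocalizedModule S N} {s : A}
    (h : mkLinearMap S N ∘ₗ g = s • (j.restrictScalars A ∘ₗ mkLinearMap S M)) :
    map S g = algebraMap A (Localization S) s • j := by
  apply LinearMap.restrictScalars_injective A
  apply IsLocalizedModule.linearMap_ext S (mkLinearMap S M) (mkLinearMap S N)
  ext m
  simpa using LinearMap.congr_fun h m

theorem exists_embedding_with_retraction_after_inverting_p_general
    (p : ℕ)
    {A : Type*} [CommRing A]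
    (hAtf : Function.Injective fun a : A => (p : A) * a)
    {M : Type*} [AddCommGroup M] [Module A M] [Module.Finite A M]
    (hMtf : Function.Injective fun x : M => (p : A) • x)
    (hMproj : Module.Projective (Localization (Submonoid.powers (p : A)))
      (LocalizedModule (Submonoid.powers (p : A)) M)) :
    ∃ (r : ℕ) (ι : M →ₗ[A] (Fin r → A)), Function.Injective ι ∧
      ∃ ρ : LocalizedModule (Submonoid.powers (p : A)) (Fin r → A)
          →ₗ[Localization (Submonoid.powers (p : A))]
            LocalizedModule (Submonoid.powers (p : A)) M,
        ∀ x : LocalizedModule (Submonoid.powers (p : A)) M,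
          ρ (LocalizedModule.map (Submonoid.powers (p : A)) ι x) = x := by
  set S := Submonoid.powers (p : A)
  obtain ⟨k, π, hπ⟩ := Module.Finite.exists_fin' A M
  obtain ⟨i, hi⟩ := Module.projective_lifting_property (LocalizedModule.map S π) LinearMap.id
    (LocalizedModule.map_surjective S π hπ)
  obtain ⟨s, ι, hι⟩ := IsLocalizedModule.exists_comp_eq_smul_of_injective S
    (LocalizedModule.mkLinearMap S (Fin k → A))
    (LocalizedModule.mkLinearMap_powers_injective (IsSMulRegular.pi fun _ => hAtf))
    (i.restrictScalars A ∘ₗ LocalizedModule.mkLinearMap S M)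
  have hs : IsUnit (algebraMap A (Localization S) s) := IsLocalization.map_units _ s
  refine ⟨k, ι, ?_, hs.unit⁻¹.val • LocalizedModule.map S π, fun x => ?_⟩
  · exact IsLocalizedModule.injective_of_comp_eq_smul _ s hι
      ((LinearMap.injective_of_comp_eq_id i _ hi).comp
        (LocalizedModule.mkLinearMap_powers_injective hMtf))
  · rw [LocalizedModule.map_eq_smul_of_comp_eq S hι]
    rw [LinearMap.smul_apply, LinearMap.smul_apply, map_smul, smul_smul, hs.val_inv_mul, one_smul]
    exact LinearMap.congr_fun hi x

/-- **Embedding into a finite free module with a retraction after inverting `p`.** Let `p` be a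
prime, `A` a `p`-torsion free commutative ring, and `M` a finitely generated `p`-torsion free
`A`-module such that `M[1/p]` is a finite projective `A[1/p]`-module. Then there exist `r ≥ 0`,
an injective `A`-linear map `ι : M → A^r`, and an `A[1/p]`-linear map
`ρ : (A[1/p])^r → M[1/p]` such that `ρ` composed with the localization of `ι` is the identity
of `M[1/p]`. -/
theorem exists_embedding_with_retraction_after_inverting_p
    (p : ℕ) (hp : p.Prime)
    {A : Type*} [CommRing A]
    (hAtf : Function.Injective fun a : A => (p : A) * a)
    {M : Type*} [AddCommGroup M] [Module A M] [Module.Finite A M]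
    (hMtf : Function.Injective fun x : M => (p : A) • x)
    (hMfin : Module.Finite (Localization (Submonoid.powers (p : A)))
      (LocalizedModule (Submonoid.powers (p : A)) M))
    (hMproj : Module.Projective (Localization (Submonoid.powers (p : A)))
      (LocalizedModule (Submonoid.powers (p : A)) M)) :
    ∃ (r : ℕ) (ι : M →ₗ[A] (Fin r → A)), Function.Injective ι ∧
      ∃ ρ : LocalizedModule (Submonoid.powers (p : A)) (Fin r → A)
          →ₗ[Localization (Submonoid.powers (p : A))]
            LocalizedModule (Submonoid.powers (p : A)) M,
        ∀ x : LocalizedModule (Submonoid.powers (p : A)) M,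
          ρ (LocalizedModule.map (Submonoid.powers (p : A)) ι x) = x :=
  exists_embedding_with_retraction_after_inverting_p_general p hAtf hMtf hMproj
end
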